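/- Let η be a grouping map and N a negator on a complete lattice L, with I_η the induced co-residual implicator, and let P = {A_j : j ∈ J} be an L-fuzzy partition of a nonempty set X. Fix j ∈ J. Then: (i) F^↓η_j[u̅] = η(0, u) holds for all u ∈ L if and only if F^↓η_j[0̅] = 0; and (ii) F^↑Iη_j[u̅] = I_η(0, u) holds for all u ∈ L if and only if F^↑Iη_j[1̅] = 1, where u̅, 0̅, 1̅ denote the constant maps X → L with values u, 0, 1. -/
import Mathlib


/-- An overlap map on a complete lattice `L`. -/
structure IsOverlapMap {L : Type*} [CompleteLattice L] (θ : L → L → L) : Prop where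
  comm : ∀ u v : L, θ u v = θ v u
  bot_iff : ∀ u v : L, θ u v = ⊥ ↔ u = ⊥ ∨ v = ⊥
  top_iff : ∀ u v : L, θ u v = ⊤ ↔ u = ⊤ ∧ v = ⊤
  mono : ∀ u v w : L, v ≤ w → θ u v ≤ θ u w
  sSup_dist : ∀ (u : L) (S : Set L), θ u (sSup S) = ⨆ v ∈ S, θ u v
  sInf_dist : ∀ (S : Set L) (v : L), θ (sInf S) v = ⨅ u ∈ S, θ u v

/-- A grouping map on a complete lattice `L`. -/
structure IsGroupingMap {L : Type*} [CompleteLattice L] (η : L → L → L) : Prop where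
  comm : ∀ u v : L, η u v = η v u
  bot_iff : ∀ u v : L, η u v = ⊥ ↔ u = ⊥ ∧ v = ⊥
  top_iff : ∀ u v : L, η u v = ⊤ ↔ u = ⊤ ∨ v = ⊤
  mono : ∀ u v w : L, v ≤ w → η u v ≤ η u w
  sSup_dist : ∀ (u : L) (S : Set L), η u (sSup S) = ⨆ v ∈ S, η u v
  sInf_dist : ∀ (S : Set L) (v : L), η (sInf S) v = ⨅ u ∈ S, η u v

/-- The residual implicator induced by an overlap map `θ`:
`I_θ(u,v) = ⨆ {w | θ u w ≤ v}`. -/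
def resImp {L : Type*} [CompleteLattice L] (θ : L → L → L) (u v : L) : L :=
  sSup {w : L | θ u w ≤ v}

/-- The co-residual implicator induced by a grouping map `η`:
`I_η(u,v) = ⨅ {w | η u w ≥ v}`. -/
def coresImp {L : Type*} [CompleteLattice L] (η : L → L → L) (u v : L) : L :=
  sInf {w : L | v ≤ η u w}

/-- A negator on `L`: an antitone map with `N ⊥ = ⊤` and `N ⊤ = ⊥`. -/
def IsNegator {L : Type*} [CompleteLattice L] (N : L → L) : Prop :=
  Antitone N ∧ N ⊥ = ⊤ ∧ N ⊤ = ⊥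

/-- An `L`-fuzzy partition: each member is normal (its core is nonempty) and
the cores form a partition of `X` (every point lies in exactly one core). -/
def IsLFuzzyPartition {L : Type*} [CompleteLattice L] {J X : Type*}
    (A : J → X → L) : Prop :=
  (∀ j, ∃ x, A j x = ⊤) ∧ (∀ x, ∃! j, A j x = ⊤)

/-- The direct (θ-upper) F-transform `F^↑θ_j[f]`. -/
def FupO {L : Type*} [CompleteLattice L] {J X : Type*} (θ : L → L → L)
    (A : J → X → L) (j : J) (f : X → L) : L :=
  ⨆ x, θ (A j x) (f x)

/-- The direct (η-lower) F-transform `F^↓η_j[f]`. -/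
def FdownG {L : Type*} [CompleteLattice L] {J X : Type*} (η : L → L → L)
    (N : L → L) (A : J → X → L) (j : J) (f : X → L) : L :=
  ⨅ x, η (N (A j x)) (f x)

/-- The direct (I_η-upper) F-transform `F^↑Iη_j[f]`. -/
def FupI {L : Type*} [CompleteLattice L] {J X : Type*} (η : L → L → L)
    (N : L → L) (A : J → X → L) (j : J) (f : X → L) : L :=
  ⨆ x, coresImp η (N (A j x)) (f x)

/-- The direct (I_θ-lower) F-transform `F^↓Iθ_j[f]`. -/
def FdownI {L : Type*} [CompleteLattice L] {J X : Type*} (θ : L → L → L)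
    (A : J → X → L) (j : J) (f : X → L) : L :=
  ⨅ x, resImp θ (A j x) (f x)

/-- `F^↓η_j[u̅] = η(0,u)` for all `u` iff `F^↓η_j[0̅] = 0`, and
`F^↑Iη_j[u̅] = I_η(0,u)` for all `u` iff `F^↑Iη_j[1̅] = 1`. -/
theorem transforms_const_iff {L : Type*} [CompleteLattice L] {J X : Type*}
    [Nonempty X] (η : L → L → L) (N : L → L)
    (hη : IsGroupingMap η) (hN : IsNegator N)
    (A : J → X → L) (hA : IsLFuzzyPartition A) :
    ∀ j : J,
      ((∀ u : L, FdownG η N A j (fun _ => u) = η ⊥ u) ↔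
        FdownG η N A j (fun _ => (⊥ : L)) = ⊥) ∧
      ((∀ u : L, FupI η N A j (fun _ => u) = coresImp η ⊥ u) ↔
        FupI η N A j (fun _ => (⊤ : L)) = ⊤) := by
  intro j
  obtain ⟨x0, hx0⟩ := hA.1 j
  have hN0 : N (A j x0) = ⊥ := by rw [hx0]; exact hN.2.2
  -- monotonicity of η in the first argument
  have hmono1 : ∀ a b v : L, a ≤ b → η a v ≤ η b v := by
    intro a b v hab
    have h := hη.sInf_dist {a, b} v
    rw [sInf_pair] at h
    have h2 : (⨅ u ∈ ({a, b} : Set L), η u v) = η a v ⊓ η b v := by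
      rw [iInf_insert]; simp
    rw [h2, inf_eq_left.2 hab] at h
    exact h.le.trans inf_le_right
  -- claim 1
  have claim1 : ∀ u : L, FdownG η N A j (fun _ => u) = η ⊥ u := by
    intro u
    apply le_antisymm
    · calc FdownG η N A j (fun _ => u) ≤ η (N (A j x0)) u := iInf_le _ x0
      _ = η ⊥ u := by rw [hN0]
    · exact le_iInf fun x => hmono1 ⊥ _ u bot_le
  -- claim 2
  have claim2 : ∀ u : L, FupI η N A j (fun _ => u) = coresImp η ⊥ u := by
    intro u
    apply le_antisymm
    · apply iSup_le
      intro x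
      apply sInf_le_sInf
      intro w hw
      exact hw.trans (hmono1 ⊥ _ w bot_le)
    · calc coresImp η ⊥ u = coresImp η (N (A j x0)) u := by rw [hN0]
      _ ≤ FupI η N A j (fun _ => u) := le_iSup (fun x => coresImp η (N (A j x)) u) x0
  refine ⟨⟨fun _ => ?_, fun _ => claim1⟩, ⟨fun _ => ?_, fun _ => claim2⟩⟩
  · rw [claim1 ⊥, (hη.bot_iff ⊥ ⊥).2 ⟨rfl, rfl⟩]
  · rw [claim2 ⊤]
    apply le_antisymm le_top
    apply le_sInf
    intro w hw
    rcases (hη.top_iff ⊥ w).1 (top_le_iff.1 hw) with h | h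
    · calc (⊤ : L) = ⊥ := h.symm
      _ ≤ w := bot_le
    · exact h.ge
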